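/- There exists a constant c > 0 such that for every ε > 0 there is n₀ with the following property: for all integers n ≥ n₀ and m ≥ 0, the number of matrices M ∈ GL(n, F₂) for which there exist a matrix E ∈ F₂^{n×m}, an invertible matrix F ∈ GL(m, F₂), a natural number d ≤ c · n² / ((n+m) · log₂(n+m)), and parallel row-elimination matrices R₁, …, R_d ∈ F₂^{(n+m)×(n+m)} with R_d ⋯ R₂R₁ = [[M, E], [0, F]], is at most ε · |GL(n, F₂)|. (In other words, for a 1 − o(1) fraction of CNOT operators, any CNOT circuit with m ancillae implementing them requires depth Ω(n²/((n+m)·log(n+m))).) -/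

import Mathlib

/-!
A layer of parallel row eliminations is determined by the map sending each row to the row added
to it (or to itself when it is untouched), so on `N = n + m` wires there are at most `N ^ N`
layers, and, padding with identity layers, at most `N ^ (N * D)` circuits of depth `≤ D`.
For `D ≤ n² / (2 N log₂ N)` this is at most `2 ^ (n² / 2)`, whereas
`|GL(n, F₂)| = ∏_{i < n} (2ⁿ - 2ⁱ) ≥ 2 ^ (n (n - 1))`, so the reachable fraction is at most `2⁻ⁿ`.
-/

open Matrix

/-- A parallel row-elimination matrix over `F₂`: either the identity, or
`I + Σ_k E_{j_k, i_k}` where the `2t` indices `i_1, j_1, …, i_t, j_t` are pairwise distinct. -/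
def IsParallelRowElim {ι : Type} [DecidableEq ι] (R : Matrix ι ι (ZMod 2)) : Prop :=
  R = 1 ∨ ∃ (t : ℕ) (i j : Fin t → ι),
    Function.Injective (Sum.elim i j) ∧
    R = 1 + ∑ k : Fin t, Matrix.single (j k) (i k) 1

section ParallelRowElim

variable {ι : Type} [DecidableEq ι]

-- `p` need not come from a valid layer: these matrices only over-count the layers.
def rowAddMatrix (p : ι → ι) : Matrix ι ι (ZMod 2) :=
  of fun j i => if i = j ∨ i = p j then 1 else 0

lemma rowAddMatrix_id : rowAddMatrix (id : ι → ι) = 1 := by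
  ext j i
  simp [rowAddMatrix, one_apply, eq_comm]

lemma IsParallelRowElim.exists_eq_rowAddMatrix {R : Matrix ι ι (ZMod 2)}
    (hR : IsParallelRowElim R) : ∃ p : ι → ι, rowAddMatrix p = R := by
  rcases hR with rfl | ⟨t, a, b, hinj, rfl⟩
  · exact ⟨id, rowAddMatrix_id⟩
  have hb : Function.Injective b := hinj.comp Sum.inr_injective
  have hab : ∀ k k', a k ≠ b k' := fun k k' h => Sum.inl_ne_inr (hinj h)
  refine ⟨Function.extend b a id, ?_⟩
  ext j i
  simp only [rowAddMatrix, of_apply, Matrix.add_apply, Matrix.sum_apply, single_apply, one_apply]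
  by_cases hj : ∃ k, b k = j
  · obtain ⟨k, rfl⟩ := hj
    rw [hb.extend_apply, Finset.sum_eq_single k]
    · have hne : a k ≠ b k := hab k k
      rcases eq_or_ne (b k) i with rfl | h1
      · simp [hne]
      rcases eq_or_ne (a k) i with rfl | h2
      · simp [hne.symm]
      simp [h1, h2, h1.symm, h2.symm]
    · intro k' _ hk'
      simp [hb.ne hk']
    · simp
  · rw [Function.extend_apply' _ _ _ hj, Finset.sum_eq_zero]
    · simp [eq_comm]
    · intro k _
      simp only [ite_eq_right_iff, and_imp]
      exact fun hbk => absurd ⟨k, hbk⟩ hj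

end ParallelRowElim

lemma List.prod_reverse_ofFn_dite_lt {M : Type*} [Monoid M] {d D : ℕ} (h : d ≤ D)
    (f : Fin d → M) :
    (List.ofFn fun k : Fin D => if hk : (k : ℕ) < d then f ⟨k, hk⟩ else 1).reverse.prod
      = (List.ofFn f).reverse.prod := by
  have : (List.ofFn fun k : Fin D => if hk : (k : ℕ) < d then f ⟨k, hk⟩ else 1)
      = List.ofFn f ++ List.replicate (D - d) 1 := by
    apply List.ext_getElem
    · simp [Nat.add_sub_cancel' h]
    · intro k _ _
      simp only [List.getElem_ofFn, List.getElem_append, List.getElem_replicate, List.length_ofFn]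
  simp [this]

section Circuit

variable {ι : Type} [DecidableEq ι] [Fintype ι]

lemma exists_rowAddMatrix_prod_eq {d D : ℕ} (hdD : d ≤ D) {R : Fin d → Matrix ι ι (ZMod 2)}
    (hR : ∀ k, IsParallelRowElim (R k)) :
    ∃ P : Fin D → ι → ι,
      (List.ofFn fun k => rowAddMatrix (P k)).reverse.prod = (List.ofFn R).reverse.prod := by
  choose p hp using fun k => (hR k).exists_eq_rowAddMatrix
  refine ⟨fun k => if h : (k : ℕ) < d then p ⟨k, h⟩ else id, ?_⟩
  rw [← List.prod_reverse_ofFn_dite_lt hdD]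
  congr 3
  funext k
  by_cases hk : (k : ℕ) < d <;> simp [hk, hp, rowAddMatrix_id]

theorem card_le_of_forall_exists_parallelRowElim_prod {α : Type*}
    {P : α → Prop} (g : Matrix ι ι (ZMod 2) → α) (D : ℕ)
    (hP : ∀ x, P x → ∃ d ≤ D, ∃ R : Fin d → Matrix ι ι (ZMod 2),
      (∀ k, IsParallelRowElim (R k)) ∧ g (List.ofFn R).reverse.prod = x) :
    Nat.card {x // P x} ≤ (Fintype.card ι ^ Fintype.card ι) ^ D := by
  let circuit (Q : Fin D → ι → ι) : α := g (List.ofFn fun k => rowAddMatrix (Q k)).reverse.prod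
  have hsub : {x | P x} ⊆ Set.range circuit := by
    intro x hx
    obtain ⟨d, hdD, R, hR, rfl⟩ := hP x hx
    obtain ⟨Q, hQ⟩ := exists_rowAddMatrix_prod_eq hdD hR
    exact ⟨Q, by simp only [circuit, hQ]⟩
  calc Nat.card {x // P x} ≤ Nat.card (Set.range circuit) := Nat.card_mono (Set.toFinite _) hsub
    _ ≤ Nat.card (Fin D → ι → ι) := Finite.card_range_le circuit
    _ = _ := by simp [Nat.card_eq_fintype_card, ← pow_mul]

end Circuit

theorem pow_le_card_isUnit {𝔽 : Type*} [Field 𝔽] [Fintype 𝔽] (n : ℕ) :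
    Fintype.card 𝔽 ^ (n * (n - 1)) ≤ Nat.card {M : Matrix (Fin n) (Fin n) 𝔽 // IsUnit M} := by
  set q := Fintype.card 𝔽
  have hq : 2 ≤ q := Fintype.one_lt_card
  calc q ^ (n * (n - 1)) = ∏ _i : Fin n, q ^ (n - 1) := by
        rw [Finset.prod_const, Finset.card_univ, Fintype.card_fin, ← pow_mul, mul_comm]
    _ ≤ ∏ i : Fin n, (q ^ n - q ^ (i : ℕ)) := by
        gcongr with i
        have h1 : q ^ (i : ℕ) ≤ q ^ (n - 1) := Nat.pow_le_pow_right (by omega) (by omega)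
        have h2 : 2 * q ^ (n - 1) ≤ q ^ n := by
          rw [← Nat.sub_add_cancel i.pos, pow_succ', Nat.add_sub_cancel]
          exact Nat.mul_le_mul_right _ hq
        exact Nat.le_sub_of_add_le (by linarith)
    _ = Nat.card (GL (Fin n) 𝔽) := (card_GL_field n).symm
    _ = _ := Nat.card_congr Submonoid.unitsTypeEquivIsUnitSubmonoid.toEquiv

lemma natCast_pow_le_two_rpow {N D : ℕ} {x : ℝ} (hN : 2 ≤ N)
    (hD : (D : ℝ) ≤ x / (N * Real.logb 2 N)) : (((N ^ N) ^ D : ℕ) : ℝ) ≤ 2 ^ x := by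
  have hN' : (1 : ℝ) < N := by exact_mod_cast hN
  have hD' : D * (N * Real.logb 2 N) ≤ x :=
    (le_div_iff₀ (mul_pos (by linarith) (Real.logb_pos one_lt_two hN'))).mp hD
  calc (((N ^ N) ^ D : ℕ) : ℝ) = (N : ℝ) ^ ((N * D : ℕ) : ℝ) := by
        rw [Real.rpow_natCast, ← pow_mul, Nat.cast_pow]
    _ = (2 ^ Real.logb 2 N) ^ ((N * D : ℕ) : ℝ) := by
        rw [Real.rpow_logb two_pos (by norm_num) (by linarith)]
    _ = (2 : ℝ) ^ (D * (N * Real.logb 2 N)) := by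
        rw [← Real.rpow_mul zero_le_two]
        push_cast
        ring_nf
    _ ≤ 2 ^ x := Real.rpow_le_rpow_of_exponent_le one_le_two hD'

lemma two_rpow_half_sq_le {n : ℕ} {ε : ℝ} (hn : 4 ≤ n) (hε : (1 / 2 : ℝ) ^ n ≤ ε) :
    (2 : ℝ) ^ (1 / 2 * (n : ℝ) ^ 2) ≤ ε * 2 ^ (n * (n - 1)) := by
  have hn' : (4 : ℝ) ≤ n := by exact_mod_cast hn
  have hexp : 1 / 2 * (n : ℝ) ^ 2 + n ≤ ((n * (n - 1) : ℕ) : ℝ) := by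
    push_cast [Nat.cast_sub (by omega : 1 ≤ n)]
    nlinarith
  calc (2 : ℝ) ^ (1 / 2 * (n : ℝ) ^ 2)
      = (1 / 2 : ℝ) ^ n * 2 ^ (1 / 2 * (n : ℝ) ^ 2 + n) := by
        rw [Real.rpow_add two_pos, Real.rpow_natCast, mul_left_comm, ← mul_pow]
        norm_num
    _ ≤ (1 / 2 : ℝ) ^ n * 2 ^ ((n * (n - 1) : ℕ) : ℝ) := by
        gcongr
        exact one_le_two
    _ = (1 / 2 : ℝ) ^ n * 2 ^ (n * (n - 1)) := by rw [Real.rpow_natCast]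
    _ ≤ ε * 2 ^ (n * (n - 1)) := by gcongr

theorem cnot_depth_lower_bound_counting :
    ∃ c : ℝ, 0 < c ∧ ∀ ε : ℝ, 0 < ε → ∃ n₀ : ℕ, ∀ n : ℕ, n₀ ≤ n → ∀ m : ℕ,
    (Nat.card {M : Matrix (Fin n) (Fin n) (ZMod 2) //
        IsUnit M ∧
        ∃ (E : Matrix (Fin n) (Fin m) (ZMod 2))
          (F : Matrix (Fin m) (Fin m) (ZMod 2)),
          IsUnit F ∧
          ∃ d : ℕ, (d : ℝ) ≤ c * (n : ℝ) ^ 2 /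
              (((n : ℝ) + (m : ℝ)) * Real.logb 2 ((n : ℝ) + (m : ℝ))) ∧
          ∃ R : Fin d → Matrix (Fin n ⊕ Fin m) (Fin n ⊕ Fin m) (ZMod 2),
            (∀ k, IsParallelRowElim (R k)) ∧
            ((List.ofFn R).reverse).prod = Matrix.fromBlocks M E 0 F} : ℝ)
      ≤ ε * (Nat.card {M : Matrix (Fin n) (Fin n) (ZMod 2) // IsUnit M} : ℝ) := by
  refine ⟨1 / 2, one_half_pos, fun ε hε => ?_⟩
  obtain ⟨k, hk⟩ := exists_pow_lt_of_lt_one hε one_half_lt_one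
  refine ⟨max k 4, fun n hn m => ?_⟩
  have hn4 : 4 ≤ n := (le_max_right k 4).trans hn
  set B : ℝ := 1 / 2 * (n : ℝ) ^ 2 / (((n : ℝ) + m) * Real.logb 2 ((n : ℝ) + m))
  have hB : 0 ≤ B := div_nonneg (by positivity)
    (mul_nonneg (by positivity) (Real.logb_nonneg one_lt_two (by norm_cast; omega)))
  refine (Nat.cast_le.mpr (card_le_of_forall_exists_parallelRowElim_prod
    (ι := Fin n ⊕ Fin m) toBlocks₁₁ ⌊B⌋₊ ?_)).trans ?_
  · rintro M ⟨-, E, F, -, d, hd, R, hR, hprod⟩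
    exact ⟨d, Nat.le_floor hd, R, hR, by rw [hprod, toBlocks_fromBlocks₁₁]⟩
  rw [Fintype.card_sum, Fintype.card_fin, Fintype.card_fin]
  calc ((((n + m) ^ (n + m)) ^ ⌊B⌋₊ : ℕ) : ℝ)
    _ ≤ 2 ^ (1 / 2 * (n : ℝ) ^ 2) :=
        natCast_pow_le_two_rpow (by omega) (by push_cast; exact Nat.floor_le hB)
    _ ≤ ε * 2 ^ (n * (n - 1)) :=
        two_rpow_half_sq_le hn4 ((pow_le_pow_of_le_one (by norm_num) (by norm_num)
          ((le_max_left k 4).trans hn)).trans hk.le)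
    _ ≤ _ := by
        gcongr
        exact_mod_cast ZMod.card 2 ▸ pow_le_card_isUnit (𝔽 := ZMod 2) n
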